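/- Soundness of gradient-based bug localization for independent straight-line traces: suppose a buggy trace and a correct trace of the same length differ only in statement s_i, all statements are semantically independent and upward exposed, and the buggy statement actually changes the forward-reachable state. Then the gradient of the difference between the buggy forward execution and the correct forward execution is nonzero exactly at position i, so the suspicious set computed by comparing consecutive differences contains i. -/

import Mathlib

structure Stmt (V D : Type) where
  lhs : V
  rhs : (V → D) → D

def exec {V D : Type} [DecidableEq V] (s : Stmt V D) (σ : V → D) : V → D :=
  Function.update σ s.lhs (s.rhs σ)

def run {V D : Type} [DecidableEq V] (σ : V → D) (t : List (Stmt V D)) : V → D :=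
  t.foldl (fun σ s => exec s σ) σ

/-- Number of variables on which two states disagree. -/
def diff {V D : Type} [Fintype V] [DecidableEq D] (σ τ : V → D) : ℕ :=
  (Finset.univ.filter fun v => σ v ≠ τ v).card

def Reads {V D : Type} [DecidableEq V] (s : Stmt V D) (x : V) : Prop :=
  ∃ (σ : V → D) (d : D), s.rhs (Function.update σ x d) ≠ s.rhs σ

/-!
Before position `i` the two traces coincide, so the states agree and the difference is `0`.
Statement `i` writes the same variable `x` in both traces, with different values by
assumption, so right after it the states differ exactly at `x`. No later statement writes
`x` or reads it, and the later statements are shared, so the states keep differing exactly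
at `x`: the difference is `1` from position `i + 1` on, and it jumps only at `i`.
-/

section Semantics

variable {V D : Type} [DecidableEq V]

theorem Stmt.rhs_eq_of_not_reads {s : Stmt V D} {x : V} (h : ¬ Reads s x) {σ τ : V → D}
    (hστ : Set.EqOn σ τ {x}ᶜ) : s.rhs σ = s.rhs τ := by
  have hτ : τ = Function.update σ x (τ x) :=
    Function.eq_update_iff.mpr ⟨rfl, fun v hv => (hστ hv).symm⟩
  rw [hτ]
  by_contra hne
  exact h ⟨σ, τ x, Ne.symm hne⟩

theorem exec_apply_of_ne {s : Stmt V D} {v : V} (h : v ≠ s.lhs) (σ : V → D) :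
    exec s σ v = σ v :=
  Function.update_of_ne h _ _

theorem exec_apply_lhs (s : Stmt V D) (σ : V → D) : exec s σ s.lhs = s.rhs σ :=
  Function.update_self _ _ _

theorem eqOn_exec {s : Stmt V D} {x : V} (h : ¬ Reads s x) {σ τ : V → D}
    (hστ : Set.EqOn σ τ {x}ᶜ) : Set.EqOn (exec s σ) (exec s τ) {x}ᶜ := by
  intro v hv
  by_cases hvs : v = s.lhs
  · rw [hvs, exec_apply_lhs, exec_apply_lhs, Stmt.rhs_eq_of_not_reads h hστ]
  · rw [exec_apply_of_ne hvs, exec_apply_of_ne hvs, hστ hv]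

theorem run_append (σ : V → D) (t₁ t₂ : List (Stmt V D)) :
    run σ (t₁ ++ t₂) = run (run σ t₁) t₂ :=
  List.foldl_append

theorem run_take_succ (σ : V → D) (t : List (Stmt V D)) {k : ℕ} (hk : k < t.length) :
    run σ (t.take (k + 1)) = exec t[k] (run σ (t.take k)) := by
  rw [List.take_add_one, List.getElem?_eq_getElem hk, Option.toList_some, run_append]
  rfl

theorem run_apply_of_forall_lhs_ne {t : List (Stmt V D)} {x : V}
    (h : ∀ s ∈ t, s.lhs ≠ x) (σ : V → D) : run σ t x = σ x := by
  induction t generalizing σ with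
  | nil => rfl
  | cons s t ih =>
    rw [List.forall_mem_cons] at h
    exact (ih h.2 (exec s σ)).trans (exec_apply_of_ne h.1.symm σ)

theorem eqOn_run {t : List (Stmt V D)} {x : V} (h : ∀ s ∈ t, ¬ Reads s x) {σ τ : V → D}
    (hστ : Set.EqOn σ τ {x}ᶜ) : Set.EqOn (run σ t) (run τ t) {x}ᶜ := by
  induction t generalizing σ τ with
  | nil => exact hστ
  | cons s t ih =>
    rw [List.forall_mem_cons] at h
    exact ih h.2 (eqOn_exec h.1 hστ)

end Semantics

section Difference

variable {V D : Type} [Fintype V] [DecidableEq D]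

theorem diff_self (σ : V → D) : diff σ σ = 0 := by
  simp [diff]

theorem diff_eq_one_of_eqOn_compl [DecidableEq V] {σ τ : V → D} {x : V} (hx : σ x ≠ τ x)
    (h : Set.EqOn σ τ {x}ᶜ) : diff σ τ = 1 := by
  rw [diff, Finset.card_eq_one]
  refine ⟨x, Finset.ext fun v => ?_⟩
  simp only [Finset.mem_filter, Finset.mem_univ, true_and, Finset.mem_singleton]
  exact ⟨fun hv => by_contra fun hvx => hv (h hvx), fun hvx => hvx ▸ hx⟩

end Difference

section Traces

variable {α : Type*} {l l' : List α} {i : ℕ}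

theorem List.take_eq_take_of_getElem_eq_off (hlen : l.length = l'.length)
    (h : ∀ (j : ℕ) (hj : j < l.length), j ≠ i → l[j] = l'[j]'(hlen ▸ hj))
    {k : ℕ} (hk : k ≤ i) : l.take k = l'.take k := by
  refine List.ext_getElem (by simp [hlen]) fun j hj _ => ?_
  rw [List.length_take] at hj
  simp only [List.getElem_take]
  exact h j (by omega) (by omega)

theorem List.drop_succ_eq_drop_succ_of_getElem_eq_off (hlen : l.length = l'.length)
    (h : ∀ (j : ℕ) (hj : j < l.length), j ≠ i → l[j] = l'[j]'(hlen ▸ hj)) :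
    l.drop (i + 1) = l'.drop (i + 1) := by
  refine List.ext_getElem (by simp [hlen]) fun j hj _ => ?_
  rw [List.length_drop] at hj
  simp only [List.getElem_drop]
  exact h _ (by omega) (by omega)

end Traces

theorem lhs_ne_and_not_reads_of_mem_drop {V D : Type} [DecidableEq V] {P : List (Stmt V D)}
    {i : ℕ} (hi : i < P.length) (hnodup : (P.map Stmt.lhs).Nodup)
    (hind : ∀ (j k : ℕ) (hj : j < P.length) (hk : k < P.length), j ≠ k →
      ¬ Reads P[j] P[k].lhs) :
    ∀ s ∈ P.drop (i + 1), s.lhs ≠ P[i].lhs ∧ ¬ Reads s P[i].lhs := by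
  rintro s hs
  obtain ⟨j, hj, rfl⟩ := List.mem_iff_getElem.mp hs
  have hj' : i + 1 + j < P.length := by rw [List.length_drop] at hj; omega
  rw [List.getElem_drop]
  refine ⟨fun hlhs => ?_, hind _ i hj' hi (by omega)⟩
  have hidx := (hnodup.getElem_inj_iff (hi := by simpa using hj') (hj := by simpa using hi)).mp
    (by simpa using hlhs)
  omega

theorem diff_run_take_eq {V D : Type} [DecidableEq V] [Fintype V] [DecidableEq D]
    {P Q : List (Stmt V D)} {pre : V → D} {i : ℕ}
    (hlen : P.length = Q.length) (hi : i < P.length)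
    (heq : ∀ (j : ℕ) (hj : j < P.length), j ≠ i → P[j] = Q[j]'(hlen ▸ hj))
    (hlhs : P[i].lhs = (Q[i]'(hlen ▸ hi)).lhs)
    (hnodup : (P.map Stmt.lhs).Nodup)
    (hind : ∀ (j k : ℕ) (hj : j < P.length) (hk : k < P.length), j ≠ k →
      ¬ Reads P[j] P[k].lhs)
    (hbug : P[i].rhs (run pre (P.take i)) ≠ (Q[i]'(hlen ▸ hi)).rhs (run pre (Q.take i)))
    (k : ℕ) : diff (run pre (P.take k)) (run pre (Q.take k)) = if k ≤ i then 0 else 1 := by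
  split_ifs with hk
  · rw [List.take_eq_take_of_getElem_eq_off hlen heq hk, diff_self]
  obtain ⟨n, rfl⟩ : ∃ n, k = i + 1 + n := ⟨k - (i + 1), by omega⟩
  have hiQ : i < Q.length := hlen ▸ hi
  set x := P[i].lhs
  have htail := lhs_ne_and_not_reads_of_mem_drop hi hnodup hind
  rw [List.take_add (l := P), List.take_add (l := Q),
    ← List.drop_succ_eq_drop_succ_of_getElem_eq_off hlen heq, run_append, run_append]
  apply diff_eq_one_of_eqOn_compl (x := x)
  · have hwrite : ∀ s ∈ (P.drop (i + 1)).take n, s.lhs ≠ x :=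
      fun s hs => (htail s (List.mem_of_mem_take hs)).1
    rw [run_apply_of_forall_lhs_ne hwrite, run_apply_of_forall_lhs_ne hwrite,
      run_take_succ _ _ hi, run_take_succ _ _ hiQ, exec_apply_lhs, hlhs, exec_apply_lhs]
    exact hbug
  · refine eqOn_run (fun s hs => (htail s (List.mem_of_mem_take hs)).2) fun v hv => ?_
    have hvQ : v ≠ Q[i].lhs := hlhs ▸ hv
    rw [run_take_succ _ _ hi, run_take_succ _ _ hiQ, exec_apply_of_ne hv, exec_apply_of_ne hvQ,
      List.take_eq_take_of_getElem_eq_off hlen heq le_rfl]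

/-- soundness of gradient-based bug localization for independent
straight-line traces: if a buggy trace P and a correct trace Q of the same
length differ only in statement s_i, all statements are semantically
independent (distinct left-hand sides, hence upward exposed, and no statement
reads a variable written by another), and the buggy statement actually changes
the forward-reachable state, then the gradient of the difference between the
two forward executions is nonzero exactly at position i; in particular the
suspicious set { k : diff_k ≠ diff_{k+1} } contains i. -/
theorem gradient_localization_sound {V D : Type} [DecidableEq V] [Fintype V] [DecidableEq D]
    (P Q : List (Stmt V D)) (pre : V → D) (i : ℕ)
    (hlen : P.length = Q.length) (hi : i < P.length)
    (heq : ∀ (j : ℕ) (hj : j < P.length), j ≠ i → P[j] = Q[j]'(by omega))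
    (hlhs : (P[i]'hi).lhs = (Q[i]'(by omega)).lhs)
    (hnodupP : (P.map Stmt.lhs).Nodup)
    (hindP : ∀ (j k : ℕ) (hj : j < P.length) (hk : k < P.length), j ≠ k →
      ¬ Reads (P[j]'hj) ((P[k]'hk).lhs))
    (hbug : (P[i]'hi).rhs (run pre (P.take i)) ≠ (Q[i]'(by omega)).rhs (run pre (Q.take i))) :
    ∀ (k : ℕ), k < P.length →
      (diff (run pre (P.take k)) (run pre (Q.take k)) ≠
        diff (run pre (P.take (k + 1))) (run pre (Q.take (k + 1))) ↔ k = i) := by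
  intro k _
  simp only [diff_run_take_eq hlen hi heq hlhs hnodupP hindP hbug]
  split_ifs <;> omega
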